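/- Let G(T) = ⋃_{u ∈ S(T)} f(u) ⊆ F_∞ for a tree T on {a,b}, where S is the outlining map into trees on {a,b,c,d} and f is the recursive set-valued encoding. Then for every w ∈ {a,b}^{<ℕ} and every nonempty tree T: G(T) ∩ x_w^{-1}G(T) = w·G(T_w), and hence w^{-1}G(T) ∩ (x_w w)^{-1}G(T) = G(T_w). -/

import Mathlib

/-!
Every element of `f(u)` is a positive word in the generators of `F_∞`: it is obtained from `u`
by prefixing some disjoint nonempty blocks `s` of `u` with `x_s`. Positive words are reduced, so a
product `x_w · g` with `g` positive lies in `f(u)` only when the first block is `w` itself, that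
is, when `u = w⌢t` and `g ∈ w · f(t)`. Conversely `w · f(t)` and `x_w w · f(t)` lie in `f(w⌢t)`.
Since `w⌢t ∈ S(T)` exactly when `t ∈ S(T_w)`, this gives `G(T) ∩ x_w⁻¹ G(T) = w · G(T_w)`, and
translating by `w⁻¹` gives the second identity.
-/

/-- Generators of `F_∞`: the four letters `a,b,c,d` (as `Fin 4`) together with a
generator `x_w` for each nonempty word `w ∈ {a,b,c,d}^{<ℕ}`. -/
abbrev FGen := Fin 4 ⊕ {w : List (Fin 4) // w ≠ []}

/-- The image of a word `w ∈ {a,b,c,d}^{<ℕ}` in the free group `F_∞`. -/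
def wordEmb (w : List (Fin 4)) : FreeGroup FGen :=
  (w.map (fun i => FreeGroup.of (Sum.inl i))).prod

/-- The generator `x_w` for a nonempty word `w`. -/
def xGen (w : List (Fin 4)) (h : w ≠ []) : FreeGroup FGen :=
  FreeGroup.of (Sum.inr ⟨w, h⟩)

/-- Fuel-based version of the recursive definition of `f`. -/
def fencAux : ℕ → List (Fin 4) → Set (FreeGroup FGen)
  | 0, w => if w = [] then {1} else ∅
  | n + 1, w =>
    if hw : w = [] then {1}
    else if w.length = 1 then {wordEmb w, xGen w hw * wordEmb w}
    else
      {g | ∃ s t : List (Fin 4), s ≠ [] ∧ t ≠ [] ∧ w = s ++ t ∧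
          ∃ p ∈ fencAux n s, ∃ q ∈ fencAux n t, g = p * q} ∪
        {xGen w hw * wordEmb w}

/-- The recursively defined encoding `f : {a,b,c,d}^{<ℕ} → 𝒫(F_∞)`:
`f(e) = {e}`, `f(z) = {z, x_z z}` for letters `z`, and
`f(w) = (⋃_{w = s⌢t, s,t ≠ e} f(s)f(t)) ∪ {x_w w}` for longer words. -/
def fenc (w : List (Fin 4)) : Set (FreeGroup FGen) :=
  fencAux w.length w


/-- Inclusion of `{a,b}^{<ℕ}` into `{a,b,c,d}^{<ℕ}`. -/
def abIncl : List (Fin 2) → List (Fin 4) :=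
  List.map (Fin.castLE (by omega))

/-- The outlining map `S(T) = T ∪ t_a(T)⌢c ∪ t_b(T)⌢d`. -/
def outline (T : Set (List (Fin 2))) : Set (List (Fin 4)) :=
  (abIncl '' T) ∪
  {s | ∃ w ∈ T, w ++ [0] ∉ T ∧ s = abIncl w ++ [2]} ∪
  {s | ∃ w ∈ T, w ++ [1] ∉ T ∧ s = abIncl w ++ [3]}

/-- `G(T) = ⋃_{u ∈ S(T)} f(u) ⊆ F_∞`. -/
def GTset (T : Set (List (Fin 2))) : Set (FreeGroup FGen) :=
  ⋃ u ∈ outline T, fenc u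

open Pointwise

namespace FreeGroup

variable {α : Type*}

def posWord (L : List α) : FreeGroup α := mk (L.map (·, true))

@[simp] lemma posWord_nil : posWord ([] : List α) = 1 := one_eq_mk.symm

@[simp] lemma posWord_append (L M : List α) : posWord (L ++ M) = posWord L * posWord M := by
  simp [posWord, mul_mk]

@[simp] lemma posWord_cons (x : α) (L : List α) : posWord (x :: L) = of x * posWord L :=
  posWord_append [x] L

lemma toWord_posWord [DecidableEq α] (L : List α) : (posWord L).toWord = L.map (·, true) :=
  toWord_mk.trans <| IsReduced.reduce_eq <| by
    simpa [IsReduced, List.isChain_map] using List.isChain_iff_getElem.2 fun _ _ => trivial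

lemma posWord_injective : Function.Injective (posWord (α := α)) := fun L M h => by
  classical
  have := congrArg toWord h
  rwa [toWord_posWord, toWord_posWord, (List.map_injective_iff.2 _).eq_iff] at this
  exact fun a b h => congrArg Prod.fst h

end FreeGroup

open FreeGroup

lemma wordEmb_eq_posWord (u : List (Fin 4)) : wordEmb u = posWord (u.map Sum.inl) := by
  induction u with
  | nil => rfl
  | cons z u ih => simpa [wordEmb] using ih

def blockWord (s : List (Fin 4)) (hs : s ≠ []) : List FGen := Sum.inr ⟨s, hs⟩ :: s.map Sum.inl

@[simp] lemma posWord_blockWord (s : List (Fin 4)) (hs : s ≠ []) :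
    posWord (blockWord s hs) = xGen s hs * wordEmb s := by
  rw [blockWord, posWord_cons, wordEmb_eq_posWord, xGen]

/-- `Spelling u L` says that the positive word `L` arises from `u` by prefixing some disjoint
nonempty blocks `s` of `u` with `x_s`. -/
inductive Spelling : List (Fin 4) → List FGen → Prop
  | nil : Spelling [] []
  | letter (z : Fin 4) {t L} : Spelling t L → Spelling (z :: t) (Sum.inl z :: L)
  | block (s : List (Fin 4)) (hs : s ≠ []) {t L} : Spelling t L →
      Spelling (s ++ t) (blockWord s hs ++ L)

namespace Spelling

lemma append {s t L M} (hs : Spelling s L) (ht : Spelling t M) : Spelling (s ++ t) (L ++ M) := by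
  induction hs with
  | nil => exact ht
  | letter z _ ih => exact letter z ih
  | block s hs _ ih => simpa only [List.append_assoc] using block s hs ih

lemma word (u : List (Fin 4)) : Spelling u (u.map Sum.inl) := by
  induction u with
  | nil => exact nil
  | cons z u ih => exact letter z ih

lemma single_block (s : List (Fin 4)) (hs : s ≠ []) : Spelling s (blockWord s hs) := by
  simpa using block s hs nil

lemma eq_nil_of_nil {L} (h : Spelling [] L) : L = [] := by
  generalize hu : ([] : List (Fin 4)) = u at h
  cases h with
  | nil => rfl
  | letter => simp at hu
  | block s hs _ => exact absurd (List.append_eq_nil_iff.1 hu.symm).1 hs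

end Spelling

def spellSet (u : List (Fin 4)) : Set (FreeGroup FGen) := posWord '' {L | Spelling u L}

lemma spellSet_nil : spellSet [] = {1} := by
  ext g
  constructor
  · rintro ⟨L, hL, rfl⟩
    simp [Spelling.eq_nil_of_nil hL]
  · rintro rfl
    exact ⟨[], Spelling.nil, rfl⟩

lemma wordEmb_mem_spellSet (u : List (Fin 4)) : wordEmb u ∈ spellSet u :=
  ⟨_, Spelling.word u, (wordEmb_eq_posWord u).symm⟩

lemma xGen_mul_wordEmb_mem_spellSet (s : List (Fin 4)) (hs : s ≠ []) :
    xGen s hs * wordEmb s ∈ spellSet s :=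
  ⟨_, Spelling.single_block s hs, posWord_blockWord s hs⟩

lemma mul_mem_spellSet_append {s t : List (Fin 4)} {p q : FreeGroup FGen} (hp : p ∈ spellSet s)
    (hq : q ∈ spellSet t) : p * q ∈ spellSet (s ++ t) := by
  obtain ⟨L, hL, rfl⟩ := hp
  obtain ⟨M, hM, rfl⟩ := hq
  exact ⟨L ++ M, hL.append hM, posWord_append L M⟩

lemma mem_spellSet_iff {w : List (Fin 4)} (hw : w ≠ []) {g : FreeGroup FGen} :
    g ∈ spellSet w ↔ g = xGen w hw * wordEmb w ∨ (w.length = 1 ∧ g = wordEmb w) ∨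
      ∃ s t, s ≠ [] ∧ t ≠ [] ∧ w = s ++ t ∧ ∃ p ∈ spellSet s, ∃ q ∈ spellSet t, g = p * q := by
  constructor
  · rintro ⟨L, hL, rfl⟩
    cases hL with
    | nil => exact absurd rfl hw
    | @letter z t L' hL' =>
      by_cases ht : t = []
      · subst ht
        simp [Spelling.eq_nil_of_nil hL', wordEmb]
      · exact .inr <| .inr ⟨[z], t, by simp, ht, rfl, _, wordEmb_mem_spellSet [z], _,
          ⟨L', hL', rfl⟩, by simp [wordEmb]⟩
    | @block s hs t L' hL' =>
      by_cases ht : t = []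
      · subst ht
        simp [Spelling.eq_nil_of_nil hL']
      · exact .inr <| .inr ⟨s, t, hs, ht, rfl, _, xGen_mul_wordEmb_mem_spellSet s hs, _,
          ⟨L', hL', rfl⟩, by simp⟩
  · rintro (rfl | ⟨-, rfl⟩ | ⟨s, t, -, -, rfl, p, hp, q, hq, rfl⟩)
    · exact xGen_mul_wordEmb_mem_spellSet w hw
    · exact wordEmb_mem_spellSet w
    · exact mul_mem_spellSet_append hp hq

lemma not_exists_split_of_length_eq_one {w : List (Fin 4)} (h1 : w.length = 1) :
    ¬ ∃ s t : List (Fin 4), s ≠ [] ∧ t ≠ [] ∧ w = s ++ t := by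
  rintro ⟨s, t, hs, ht, rfl⟩
  simp [← List.length_pos_iff] at hs ht h1
  omega

lemma spellSet_of_length_eq_one {w : List (Fin 4)} (hw : w ≠ []) (h1 : w.length = 1) :
    spellSet w = {wordEmb w, xGen w hw * wordEmb w} := by
  ext g
  rw [mem_spellSet_iff hw, Set.mem_insert_iff, Set.mem_singleton_iff]
  have := not_exists_split_of_length_eq_one h1
  grind

lemma spellSet_of_length_ne_one {w : List (Fin 4)} (hw : w ≠ []) (h1 : w.length ≠ 1) :
    spellSet w = {g | ∃ s t, s ≠ [] ∧ t ≠ [] ∧ w = s ++ t ∧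
      ∃ p ∈ spellSet s, ∃ q ∈ spellSet t, g = p * q} ∪ {xGen w hw * wordEmb w} := by
  ext g
  rw [mem_spellSet_iff hw, Set.mem_union, Set.mem_singleton_iff, Set.mem_ofPred_eq]
  grind

lemma fencAux_eq_spellSet (n : ℕ) (w : List (Fin 4)) (hn : w.length ≤ n) :
    fencAux n w = spellSet w := by
  induction n generalizing w with
  | zero =>
    obtain rfl : w = [] := List.length_eq_zero_iff.1 (Nat.le_zero.1 hn)
    simp [fencAux, spellSet_nil]
  | succ n ih =>
    by_cases hw : w = []
    · subst hw
      simp [fencAux, spellSet_nil]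
    by_cases h1 : w.length = 1
    · simp [fencAux, hw, h1, spellSet_of_length_eq_one hw h1]
    rw [spellSet_of_length_ne_one hw h1]
    simp only [fencAux, dif_neg hw, if_neg h1]
    refine congrArg (· ∪ _) <| Set.ext fun g => exists₂_congr fun s t =>
      and_congr_right fun hs => and_congr_right fun ht => and_congr_right fun hst => ?_
    have hs' := List.length_pos_iff.2 hs
    have ht' := List.length_pos_iff.2 ht
    rw [hst, List.length_append] at hn
    rw [ih s (by omega), ih t (by omega)]

lemma fenc_eq_spellSet (w : List (Fin 4)) : fenc w = spellSet w :=
  fencAux_eq_spellSet _ w le_rfl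

lemma exists_of_xGen_mul_posWord_mem_spellSet {s u : List (Fin 4)} (hs : s ≠ []) {M : List FGen}
    (h : xGen s hs * posWord M ∈ spellSet u) :
    ∃ t, u = s ++ t ∧ ∃ q ∈ spellSet t, posWord M = wordEmb s * q := by
  obtain ⟨L, hL, hLM⟩ := h
  rw [xGen, ← posWord_cons] at hLM
  obtain rfl := posWord_injective hLM
  generalize hL' : Sum.inr ⟨s, hs⟩ :: M = L at hL
  cases hL with
  | nil => simp at hL'
  | letter => simp at hL'
  | @block s' hs' t L' hL =>
    simp only [blockWord, List.cons_append, List.cons.injEq, Sum.inr.injEq, Subtype.mk.injEq]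
      at hL'
    obtain ⟨rfl, rfl⟩ := hL'
    exact ⟨t, rfl, _, ⟨L', hL, rfl⟩, by rw [posWord_append, wordEmb_eq_posWord]⟩

namespace List

variable {α β : Type*} {f : α → β}

lemma exists_eq_append_of_map_append_eq_map (hf : Function.Injective f) {w r : List α}
    {t : List β} (h : w.map f ++ t = r.map f) : ∃ v, r = w ++ v ∧ t = v.map f := by
  obtain ⟨w', v, rfl, hw, rfl⟩ := append_eq_map_iff.1 h
  exact ⟨v, by rw [map_injective_iff.2 hf hw], rfl⟩

lemma exists_eq_append_of_map_append_eq_map_append_singleton (hf : Function.Injective f)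
    {k : β} (hk : k ∉ Set.range f) {w r : List α} {t : List β}
    (h : w.map f ++ t = r.map f ++ [k]) : ∃ v, r = w ++ v ∧ t = v.map f ++ [k] := by
  rcases append_eq_append_iff.1 h with ⟨a, hr, rfl⟩ | ⟨c, hw, hc⟩
  · obtain ⟨v, rfl, rfl⟩ := exists_eq_append_of_map_append_eq_map hf hr.symm
    exact ⟨v, rfl, rfl⟩
  · rcases singleton_eq_append_iff.1 hc with ⟨rfl, rfl⟩ | ⟨rfl, -⟩
    · rw [append_nil] at hw
      exact ⟨[], by simp [map_injective_iff.2 hf hw], rfl⟩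
    · obtain ⟨a, -, ha⟩ := mem_map.1 (hw ▸ mem_append_right _ (mem_singleton_self k))
      exact absurd ⟨a, ha⟩ hk

end List

lemma append_mem_outline_iff (T : Set (List (Fin 2))) (w : List (Fin 2)) (t : List (Fin 4)) :
    abIncl w ++ t ∈ outline T ↔ t ∈ outline {v | w ++ v ∈ T} := by
  have hk (k : Fin 4) (h2 : 2 ≤ k.val) : k ∉ Set.range (Fin.castLE (by omega : 2 ≤ 4)) := by
    rintro ⟨a, ha⟩
    have := congrArg Fin.val ha
    simp at this
    omega
  constructor
  · rintro ((⟨r, hr, heq⟩ | ⟨r, hr, hr0, heq⟩) | ⟨r, hr, hr1, heq⟩)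
    · obtain ⟨v, rfl, rfl⟩ := List.exists_eq_append_of_map_append_eq_map
        (Fin.castLE_injective _) heq.symm
      exact .inl (.inl ⟨v, hr, rfl⟩)
    · obtain ⟨v, rfl, rfl⟩ := List.exists_eq_append_of_map_append_eq_map_append_singleton
        (Fin.castLE_injective _) (hk 2 le_rfl) heq
      exact .inl (.inr ⟨v, hr, by simpa using hr0, rfl⟩)
    · obtain ⟨v, rfl, rfl⟩ := List.exists_eq_append_of_map_append_eq_map_append_singleton
        (Fin.castLE_injective _) (hk 3 (by decide)) heq
      exact .inr ⟨v, hr, by simpa using hr1, rfl⟩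
  · rintro ((⟨v, hv, rfl⟩ | ⟨v, hv, hv0, rfl⟩) | ⟨v, hv, hv1, rfl⟩)
    · exact .inl (.inl ⟨w ++ v, hv, List.map_append⟩)
    · exact .inl (.inr ⟨w ++ v, hv, by simpa using hv0, by simp [abIncl]⟩)
    · exact .inr ⟨w ++ v, hv, by simpa using hv1, by simp [abIncl]⟩

lemma mem_GTset_iff {T : Set (List (Fin 2))} {g : FreeGroup FGen} :
    g ∈ GTset T ↔ ∃ u ∈ outline T, g ∈ spellSet u := by
  simp [GTset, fenc_eq_spellSet]

lemma GTset_subset_range_posWord (T : Set (List (Fin 2))) : GTset T ⊆ Set.range posWord := by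
  intro g hg
  obtain ⟨u, -, L, -, rfl⟩ := mem_GTset_iff.1 hg
  exact ⟨L, rfl⟩

section shift

variable (T : Set (List (Fin 2))) (w : List (Fin 2))

lemma mul_mem_GTset {p q : FreeGroup FGen} (hp : p ∈ spellSet (abIncl w))
    (hq : q ∈ GTset {v | w ++ v ∈ T}) : p * q ∈ GTset T := by
  obtain ⟨t, ht, hq⟩ := mem_GTset_iff.1 hq
  exact mem_GTset_iff.2 ⟨_, (append_mem_outline_iff T w t).2 ht, mul_mem_spellSet_append hp hq⟩

lemma mem_smul_GTset_of_xGen_mul_mem (hw : abIncl w ≠ []) {g : FreeGroup FGen} (hg : g ∈ GTset T)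
    (hxg : xGen (abIncl w) hw * g ∈ GTset T) :
    g ∈ wordEmb (abIncl w) • GTset {v | w ++ v ∈ T} := by
  obtain ⟨M, rfl⟩ := GTset_subset_range_posWord T hg
  obtain ⟨u, hu, hxu⟩ := mem_GTset_iff.1 hxg
  obtain ⟨t, rfl, q, hq, hMq⟩ := exists_of_xGen_mul_posWord_mem_spellSet hw hxu
  exact ⟨q, mem_GTset_iff.2 ⟨t, (append_mem_outline_iff T w t).1 hu, hq⟩, hMq.symm⟩

lemma GTset_inter_inv_xGen_smul (hw : abIncl w ≠ []) :
    GTset T ∩ (xGen (abIncl w) hw)⁻¹ • GTset T = wordEmb (abIncl w) • GTset {v | w ++ v ∈ T} := by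
  ext g
  rw [Set.mem_inter_iff, Set.mem_inv_smul_set_iff]
  constructor
  · rintro ⟨hg, hxg⟩
    exact mem_smul_GTset_of_xGen_mul_mem T w hw hg hxg
  · intro hg
    obtain ⟨q, hq, rfl⟩ := Set.mem_smul_set.1 hg
    refine ⟨mul_mem_GTset T w (wordEmb_mem_spellSet _) hq, ?_⟩
    rw [smul_eq_mul, smul_eq_mul, ← mul_assoc]
    exact mul_mem_GTset T w (xGen_mul_wordEmb_mem_spellSet _ hw) hq

end shift

theorem GTset_intersection_general (T : Set (List (Fin 2)))
    (w : List (Fin 2)) (hw' : abIncl w ≠ []) :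
    GTset T ∩ ((fun g => (xGen (abIncl w) hw')⁻¹ * g) '' GTset T) =
      (fun g => wordEmb (abIncl w) * g) '' GTset {v | w ++ v ∈ T} ∧
    ((fun g => (wordEmb (abIncl w))⁻¹ * g) '' GTset T) ∩
        ((fun g => (xGen (abIncl w) hw' * wordEmb (abIncl w))⁻¹ * g) '' GTset T) =
      GTset {v | w ++ v ∈ T} := by
  simp only [← smul_eq_mul, Set.image_smul]
  have key := GTset_inter_inv_xGen_smul T w hw'
  refine ⟨key, ?_⟩
  rw [smul_eq_mul, mul_inv_rev, ← smul_smul, ← Set.smul_set_inter, key, inv_smul_smul]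

/-- For every `w ∈ {a,b}^{<ℕ}` and every nonempty tree `T` on `{a,b}`:
`G(T) ∩ x_w⁻¹ G(T) = w · G(T_w)`, and hence
`w⁻¹ G(T) ∩ (x_w w)⁻¹ G(T) = G(T_w)`. -/
theorem GTset_intersection (T : Set (List (Fin 2)))
    (htree : ∀ u v : List (Fin 2), u <+: v → v ∈ T → u ∈ T)
    (hne : T.Nonempty)
    (w : List (Fin 2)) (hw : w ≠ []) (hw' : abIncl w ≠ []) :
    GTset T ∩ ((fun g => (xGen (abIncl w) hw')⁻¹ * g) '' GTset T) =
      (fun g => wordEmb (abIncl w) * g) '' GTset {v | w ++ v ∈ T} ∧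
    ((fun g => (wordEmb (abIncl w))⁻¹ * g) '' GTset T) ∩
        ((fun g => (xGen (abIncl w) hw' * wordEmb (abIncl w))⁻¹ * g) '' GTset T) =
      GTset {v | w ++ v ∈ T} :=
  GTset_intersection_general T w hw'
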